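/- Let X = (x_0·F_{d−1} + F_d = 0) ⊂ P^n be a monoid of degree d, i.e. an irreducible reduced hypersurface with a point of multiplicity d−1, where F_{d−1}, F_d are homogeneous of degrees d−1, d in x_1,…,x_n. Then the rational map φ: P^n ⇢ P^n given by the linear system {F_{d−1}·x_1, …, F_{d−1}·x_n, x_0·F_{d−1}+F_d} is birational and maps X to the hyperplane (x_n+1-st coordinate = 0). Hence every monoid is Cremona equivalent to a hyperplane. -/

import Mathlib

open MvPolynomial

/-- The components of the Cremona map associated to the monoid:
`F_{d-1}·x₁, …, F_{d-1}·xₙ, x₀·F_{d-1}+F_d`. -/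
noncomputable def monoidMap (n : ℕ) (F1 F2 : MvPolynomial (Fin (n + 1)) ℂ) :
    Fin (n + 1) → MvPolynomial (Fin (n + 1)) ℂ :=
  fun i => if h : (i : ℕ) < n then F1 * X ⟨(i : ℕ) + 1, by omega⟩ else X 0 * F1 + F2

/-!
Write `φ` for `monoidMap`. Composed with the shift `(y₀, …, yₙ) ↦ (0, y₀, …, yₙ₋₁)`, `φ` becomes
`F1 · (0, x₁, …, xₙ)`, so by homogeneity a form `P` of degree `m` in `x₁, …, xₙ`, evaluated at
the shift, pulls back along `φ` to `F1 ^ m · P`. Hence the inverse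
`(yₙ F1(shift y) - F2(shift y), y₀ F1(shift y), …, yₙ₋₁ F1(shift y))` pulls back to `F1 ^ (d+1) · x`.
The last component of `φ` is the equation of the monoid, which gives the hyperplane statement.
-/

namespace MvPolynomial

variable {σ R S : Type*} [CommSemiring R] [CommSemiring S] [Algebra R S]

theorem IsHomogeneous.aeval_mul_left {p : MvPolynomial σ R} {m : ℕ} (hp : p.IsHomogeneous m)
    (c : S) (g : σ → S) :
    MvPolynomial.aeval (fun i => c * g i) p = c ^ m * MvPolynomial.aeval g p := by
  conv_lhs => rw [p.as_sum]
  conv_rhs => rw [p.as_sum]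
  simp only [map_sum, Finset.mul_sum, aeval_monomial, Finsupp.prod, mul_pow,
    Finset.prod_mul_distrib, Finset.prod_pow_eq_pow_sum]
  refine Finset.sum_congr rfl fun s hs => ?_
  rw [← hp.degree_eq_sum_deg_support hs]
  ring

theorem aeval_congr_vars {g₁ g₂ : σ → S} {p : MvPolynomial σ R}
    (h : ∀ i ∈ p.vars, g₁ i = g₂ i) : aeval g₁ p = aeval g₂ p :=
  eval₂Hom_congr' rfl (fun i hi _ => h i hi) rfl

end MvPolynomial

section MonoidMap

variable {n : ℕ} {F1 F2 : MvPolynomial (Fin (n + 1)) ℂ}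

theorem monoidMap_castSucc (j : Fin n) : monoidMap n F1 F2 j.castSucc = F1 * X j.succ := by
  simp [monoidMap, Fin.succ]

theorem monoidMap_last : monoidMap n F1 F2 (Fin.last n) = X 0 * F1 + F2 := by
  simp [monoidMap]

variable (n) in
noncomputable def monoidShift : Fin (n + 1) → MvPolynomial (Fin (n + 1)) ℂ :=
  Fin.cases 0 fun j => X j.castSucc

theorem aeval_monoidMap_monoidShift (i : Fin (n + 1)) :
    aeval (monoidMap n F1 F2) (monoidShift n i) = F1 * Function.update X 0 0 i := by
  cases i using Fin.cases with
  | zero => simp [monoidShift]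
  | succ j => simp [monoidShift, monoidMap_castSucc]

theorem aeval_monoidMap_aeval_monoidShift {P : MvPolynomial (Fin (n + 1)) ℂ} {m : ℕ}
    (hP : P.IsHomogeneous m) (hP0 : degreeOf 0 P = 0) :
    aeval (monoidMap n F1 F2) (aeval (monoidShift n) P) = F1 ^ m * P := by
  have hupdate : aeval (Function.update X 0 0) P = P := by
    refine (aeval_congr_vars fun i hi => ?_).trans (aeval_X_left_apply P)
    have : i ≠ 0 := by rintro rfl; exact (mem_vars_iff_degreeOf_ne_zero.mp hi) hP0
    simp [this]
  rw [comp_aeval_apply]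
  simp only [aeval_monoidMap_monoidShift, hP.aeval_mul_left, hupdate]

noncomputable def monoidInverse (n : ℕ) (F1 F2 : MvPolynomial (Fin (n + 1)) ℂ) :
    Fin (n + 1) → MvPolynomial (Fin (n + 1)) ℂ :=
  Fin.cases (X (Fin.last n) * aeval (monoidShift n) F1 - aeval (monoidShift n) F2)
    fun j => X j.castSucc * aeval (monoidShift n) F1

theorem aeval_monoidMap_monoidInverse {m : ℕ} (h1 : F1.IsHomogeneous m)
    (h2 : F2.IsHomogeneous (m + 1)) (h1x : degreeOf 0 F1 = 0) (h2x : degreeOf 0 F2 = 0)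
    (i : Fin (n + 1)) :
    aeval (monoidMap n F1 F2) (monoidInverse n F1 F2 i) = F1 ^ (m + 2) * X i := by
  have hF1 := aeval_monoidMap_aeval_monoidShift (F1 := F1) (F2 := F2) h1 h1x
  have hF2 := aeval_monoidMap_aeval_monoidShift (F1 := F1) (F2 := F2) h2 h2x
  cases i using Fin.cases with
  | zero =>
    simp only [monoidInverse, Fin.cases_zero, map_sub, map_mul, aeval_X, monoidMap_last, hF1, hF2]
    ring
  | succ j =>
    simp only [monoidInverse, Fin.cases_succ, map_mul, aeval_X, monoidMap_castSucc, hF1]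
    ring

end MonoidMap

theorem monoid_map_birational_onto_hyperplane_general (n d : ℕ) (hd : 2 ≤ d)
    (F1 F2 : MvPolynomial (Fin (n + 1)) ℂ)
    (h1 : F1.IsHomogeneous (d - 1)) (h2 : F2.IsHomogeneous d)
    (h1x : degreeOf 0 F1 = 0) (h2x : degreeOf 0 F2 = 0)
    (h1ne : F1 ≠ 0) :
    (∃ (g : Fin (n + 1) → MvPolynomial (Fin (n + 1)) ℂ)
        (h : MvPolynomial (Fin (n + 1)) ℂ), h ≠ 0 ∧
        ∀ i, aeval (monoidMap n F1 F2) (g i) = h * X i) ∧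
    (∀ x : Fin (n + 1) → ℂ, eval x (X 0 * F1 + F2) = 0 →
        eval x (monoidMap n F1 F2 (Fin.last n)) = 0) := by
  rw [← Nat.sub_add_cancel (by omega : 1 ≤ d)] at h2
  refine ⟨⟨monoidInverse n F1 F2, F1 ^ (d - 1 + 2), pow_ne_zero _ h1ne,
    aeval_monoidMap_monoidInverse h1 h2 h1x h2x⟩, fun x hx => ?_⟩
  rwa [monoidMap_last]

theorem monoid_map_birational_onto_hyperplane (n d : ℕ) (hn : 1 ≤ n) (hd : 2 ≤ d)
    (F1 F2 : MvPolynomial (Fin (n + 1)) ℂ)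
    (h1 : F1.IsHomogeneous (d - 1)) (h2 : F2.IsHomogeneous d)
    (h1x : degreeOf 0 F1 = 0) (h2x : degreeOf 0 F2 = 0)
    (h1ne : F1 ≠ 0)
    (hirr : Irreducible (X 0 * F1 + F2)) :
    (∃ (g : Fin (n + 1) → MvPolynomial (Fin (n + 1)) ℂ)
        (h : MvPolynomial (Fin (n + 1)) ℂ), h ≠ 0 ∧
        ∀ i, aeval (monoidMap n F1 F2) (g i) = h * X i) ∧
    (∀ x : Fin (n + 1) → ℂ, eval x (X 0 * F1 + F2) = 0 →
        eval x (monoidMap n F1 F2 (Fin.last n)) = 0) :=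
  monoid_map_birational_onto_hyperplane_general n d hd F1 F2 h1 h2 h1x h2x h1ne
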